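/- In a quasigroup Q, the following identities are equivalent for all p,q,r in Q: (1) p(q(pr))=((pq)p)r; (2) ((pq)r)q=p(q(rq)); (3) (pq)(rp)=(p(qr))p. -/

import Mathlib

open TensorProduct

universe u v w

/-- A quasigroup: a set with product, identity `e`, and two-sided inverses satisfying
`p⁻¹(pq) = q` and `(qp)p⁻¹ = q`. -/
structure QuasigroupStruct (Q : Type u) where
  mul : Q → Q → Q
  one : Q
  inv : Q → Q
  mul_one : ∀ p, mul p one = p
  one_mul : ∀ p, mul one p = p
  inv_mul_cancel : ∀ p q, mul (inv p) (mul p q) = q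
  mul_inv_cancel : ∀ p q, mul (mul q p) (inv p) = q

namespace QuasigroupStruct

variable {Q : Type u} (G : QuasigroupStruct Q)

lemma inv_mul_self (p : Q) : G.mul (G.inv p) p = G.one := by
  have h := G.inv_mul_cancel p G.one
  rwa [G.mul_one] at h

lemma mul_inv_self (p : Q) : G.mul p (G.inv p) = G.one := by
  have h := G.mul_inv_cancel p G.one
  rwa [G.one_mul] at h

lemma inv_inv (p : Q) : G.inv (G.inv p) = p := by
  have h := G.inv_mul_cancel (G.inv p) p
  rw [G.inv_mul_self p] at h
  rwa [G.mul_one] at h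

lemma mul_inv_cancel_left (p q : Q) : G.mul p (G.mul (G.inv p) q) = q := by
  have h := G.inv_mul_cancel (G.inv p) q
  rwa [G.inv_inv] at h

lemma inv_mul_cancel_right (p q : Q) : G.mul (G.mul q (G.inv p)) p = q := by
  have h := G.mul_inv_cancel (G.inv p) q
  rwa [G.inv_inv] at h

lemma mul_inv_rev (p q : Q) : G.inv (G.mul p q) = G.mul (G.inv q) (G.inv p) := by
  have h1 : G.mul q (G.inv (G.mul p q)) = G.inv p := by
    have h := G.mul_inv_cancel (G.mul p q) (G.inv p)
    rwa [G.inv_mul_cancel p q] at h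
  calc G.inv (G.mul p q)
      = G.mul (G.inv q) (G.mul q (G.inv (G.mul p q))) := (G.inv_mul_cancel q _).symm
    _ = G.mul (G.inv q) (G.inv p) := by rw [h1]

lemma inv_one : G.inv G.one = G.one := by
  have h := G.inv_mul_cancel G.one G.one
  rwa [G.one_mul, G.mul_one] at h

end QuasigroupStruct

/-!
Inversion is an anti-automorphism, `(pq)⁻¹ = q⁻¹p⁻¹`, so inverting the left Moufang identity (1) at
inverted arguments gives the right one (2) and vice versa. Substituting `r ↦ p⁻¹r`, (1) says
`p(qr) = ((pq)p)(p⁻¹r)`; this form follows from the middle identity (3) by cancelling `r⁻¹p` on the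
right, and together with (2) and flexibility it rebuilds (3).
-/

namespace QuasigroupStruct

variable {Q : Type u} (G : QuasigroupStruct Q)

def LeftMoufang : Prop :=
  ∀ p q r, G.mul p (G.mul q (G.mul p r)) = G.mul (G.mul (G.mul p q) p) r

def RightMoufang : Prop :=
  ∀ p q r, G.mul (G.mul (G.mul p q) r) q = G.mul p (G.mul q (G.mul r q))

def MiddleMoufang : Prop :=
  ∀ p q r, G.mul (G.mul p q) (G.mul r p) = G.mul (G.mul p (G.mul q r)) p

variable {G}

theorem leftMoufang_iff_rightMoufang : G.LeftMoufang ↔ G.RightMoufang := by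
  constructor
  · intro h p q r
    simpa only [G.mul_inv_rev, G.inv_inv] using
      congrArg G.inv (h (G.inv q) (G.inv r) (G.inv p))
  · intro h p q r
    simpa only [G.mul_inv_rev, G.inv_inv] using
      congrArg G.inv (h (G.inv r) (G.inv p) (G.inv q))

theorem leftMoufang_iff_mul_mul_eq :
    G.LeftMoufang ↔
      ∀ p q r, G.mul p (G.mul q r) = G.mul (G.mul (G.mul p q) p) (G.mul (G.inv p) r) := by
  constructor
  · intro h p q r
    simpa only [G.mul_inv_cancel_left] using h p q (G.mul (G.inv p) r)
  · intro h p q r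
    simpa only [G.inv_mul_cancel] using h p q (G.mul p r)

theorem RightMoufang.flexible (h : G.RightMoufang) (p q : Q) :
    G.mul p (G.mul q p) = G.mul (G.mul p q) p := by
  simpa only [G.one_mul] using (h G.one p q).symm

theorem MiddleMoufang.leftMoufang (h : G.MiddleMoufang) : G.LeftMoufang := by
  refine leftMoufang_iff_mul_mul_eq.2 fun p q r => ?_
  have hr : G.mul (G.mul p (G.mul q r)) (G.mul (G.inv r) p) = G.mul (G.mul p q) p := by
    simpa only [G.mul_inv_cancel] using h p (G.mul q r) (G.inv r)
  calc G.mul p (G.mul q r)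
      = G.mul (G.mul (G.mul p (G.mul q r)) (G.mul (G.inv r) p))
          (G.inv (G.mul (G.inv r) p)) := (G.mul_inv_cancel _ _).symm
    _ = G.mul (G.mul (G.mul p q) p) (G.mul (G.inv p) r) := by
      rw [hr, G.mul_inv_rev, G.inv_inv]

theorem RightMoufang.middleMoufang (h : G.RightMoufang) : G.MiddleMoufang := by
  intro p q r
  rw [leftMoufang_iff_mul_mul_eq.1 (leftMoufang_iff_rightMoufang.2 h) p q r,
    h (G.mul p q) p (G.mul (G.inv p) r), h.flexible p (G.mul (G.inv p) r),
    G.mul_inv_cancel_left]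

theorem rightMoufang_iff_middleMoufang : G.RightMoufang ↔ G.MiddleMoufang :=
  ⟨RightMoufang.middleMoufang, fun h => leftMoufang_iff_rightMoufang.1 h.leftMoufang⟩

end QuasigroupStruct

theorem quasigroup_moufang_equiv {Q : Type u} (G : QuasigroupStruct Q) :
    ((∀ p q r, G.mul p (G.mul q (G.mul p r)) = G.mul (G.mul (G.mul p q) p) r) ↔
      (∀ p q r, G.mul (G.mul (G.mul p q) r) q = G.mul p (G.mul q (G.mul r q)))) ∧
    ((∀ p q r, G.mul (G.mul (G.mul p q) r) q = G.mul p (G.mul q (G.mul r q))) ↔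
      (∀ p q r, G.mul (G.mul p q) (G.mul r p) = G.mul (G.mul p (G.mul q r)) p)) :=
  ⟨QuasigroupStruct.leftMoufang_iff_rightMoufang,
    QuasigroupStruct.rightMoufang_iff_middleMoufang⟩
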